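/- arXiv:2007.09202 — 3 statements merged into one kernel-verified Lean document; each statement's English description precedes it below -/
import Mathlib

section
/- Let G be a connected graph on n vertices with minimum cut size t, let t̂ ≤ t, ε ∈ (0,1), and let H be the random subgraph keeping each edge independently with probability p = min{200·(log n)/(ε²·t̂), 1}. Then with probability at least 1 − n^{−10}, every cut of G of size k has size within (1 ± ε)·p·k in H, simultaneously for all cuts. -/
open Finset
open scoped Classical

/-- Edges of `G` crossing the partition `(A, Aᶜ)`. -/
noncomputable def cutEdges {V : Type*} [Fintype V] [DecidableEq V]
    (G : SimpleGraph V) (A : Finset V) : Finset (Sym2 V) :=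
  G.edgeFinset.filter (fun e => ∃ u ∈ A, ∃ v ∈ Aᶜ, e = s(u, v))

/-!
Fix a cut with `k` edges. The number of them kept in `H` is binomial `Bin(k, p)`, so by the
Chernoff bound it leaves `[(1 - ε) p k, (1 + ε) p k]` with probability at most
`2 exp (-ε² p k / 3) = 2 n ^ (-(200 / 3) k / t̂)` (and with probability `0` when `p` is capped
at `1`). Karger-type counting bounds the number of cuts with `⌊k / t̂⌋ = j` by `n ^ (4 (j + 1))`,
so the union bound over all cuts fails with probability at most
`∑ j ≥ 1, n ^ (4 (j + 1)) · 2 n ^ (-66 j) ≤ n ^ (-10)`.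

The counting is deterministic. For a partition of `V` into `b > 2β` blocks, every block is a
nontrivial cut, so at least `b t / 2` edges join different blocks. A cut of size `≤ β t` that is a
union of blocks contains at most a `2β / b` fraction of these edges, and for every edge it avoids
it stays a union of blocks after the two blocks of that edge are merged. Double counting gives
`N(b) ≤ b / (b - 2β) · N(b - 1)` for the number `N(b)` of such cuts, whence
`N(n) ≤ 2 ^ (2β) · (n choose 2β) ≤ n ^ (4β)`.
-/

section Analytic

open Real

lemma self_add_sq_div_three_le_mul_log_one_add {x : ℝ} (hx0 : 0 ≤ x) (hx1 : x ≤ 1) :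
    x + x ^ 2 / 3 ≤ (1 + x) * log (1 + x) := by
  calc x + x ^ 2 / 3 ≤ (1 + x) * (2 * x / (x + 2)) := by
        rw [mul_div_assoc', le_div_iff₀ (by linarith)]
        nlinarith [mul_nonneg (sq_nonneg x) (sub_nonneg.2 hx1)]
    _ ≤ (1 + x) * log (1 + x) := by gcongr; exact le_log_one_add_of_nonneg hx0

lemma neg_self_add_sq_div_two_le_mul_log_one_sub {x : ℝ} (hx0 : 0 ≤ x) (hx1 : x < 1) :
    -x + x ^ 2 / 2 ≤ (1 - x) * log (1 - x) := by
  let F (y : ℝ) : ℝ := (1 - y) * log (1 - y) + y - y ^ 2 / 2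
  have hF : ∀ y ∈ Set.Icc 0 x, HasDerivAt F (-log (1 - y) - y) y := by
    intro y hy
    have hy1 : 1 - y ≠ 0 := by linarith [hy.2]
    have h := (((hasDerivAt_id y).const_sub 1).mul
      (((hasDerivAt_id y).const_sub 1).log hy1)).add (hasDerivAt_id y) |>.sub
      ((hasDerivAt_pow 2 y).div_const 2)
    refine h.congr_deriv ?_
    simp only [id]
    field_simp
    ring
  have hmono : MonotoneOn F (Set.Icc 0 x) := by
    refine monotoneOn_of_hasDerivWithinAt_nonneg (convex_Icc 0 x)
      (fun y hy ↦ (hF y hy).continuousAt.continuousWithinAt)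
      (fun y hy ↦ (hF y (interior_subset hy)).hasDerivWithinAt) fun y hy ↦ ?_
    rw [interior_Icc] at hy
    linarith [log_le_sub_one_of_pos (show 0 < 1 - y by linarith [hy.2])]
  have := hmono ⟨le_rfl, hx0⟩ ⟨hx0, le_rfl⟩ hx0
  norm_num [F] at this
  linarith

end Analytic

section Binomial

open Real

def binomialWeight (k : ℕ) (p : ℝ) (j : ℕ) : ℝ := k.choose j * p ^ j * (1 - p) ^ (k - j)

variable {k : ℕ} {p : ℝ}

lemma binomialWeight_nonneg (hp0 : 0 ≤ p) (hp1 : p ≤ 1) (j : ℕ) : 0 ≤ binomialWeight k p j := by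
  have : 0 ≤ 1 - p := by linarith
  unfold binomialWeight
  positivity

/- Chernoff's method: on `{j | P j}` the factor `(1 + δ) ^ (j - (1 + δ) p k)` is at least `1`,
and its expectation under `Bin(k, p)` is computed by the binomial theorem. -/
lemma sum_binomialWeight_filter_le_exp (hp0 : 0 ≤ p) (hp1 : p ≤ 1) {δ : ℝ} (hδ : -1 < δ)
    (P : ℕ → Prop) [DecidablePred P]
    (hP : ∀ j, P j → log (1 + δ) * ((1 + δ) * (p * k)) ≤ log (1 + δ) * j) :
    ∑ j ∈ range (k + 1) with P j, binomialWeight k p j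
      ≤ exp (p * k * (δ - (1 + δ) * log (1 + δ))) := by
  set c := log (1 + δ)
  set a := (1 + δ) * (p * k) with ha
  have hc : exp c = 1 + δ := exp_log (by linarith)
  have hpδ : 0 ≤ 1 + p * δ := by nlinarith
  calc ∑ j ∈ range (k + 1) with P j, binomialWeight k p j
      ≤ ∑ j ∈ range (k + 1), binomialWeight k p j * exp (c * j - c * a) := by
        rw [sum_filter]
        gcongr with j
        split_ifs with h
        · exact le_mul_of_one_le_right (binomialWeight_nonneg hp0 hp1 j)
            (one_le_exp (sub_nonneg.2 (hP j h)))
        · exact mul_nonneg (binomialWeight_nonneg hp0 hp1 j) (exp_nonneg _)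
    _ = exp (-(c * a)) * (1 + p * δ) ^ k := by
        rw [show 1 + p * δ = p * exp c + (1 - p) by rw [hc]; ring, add_pow, mul_sum]
        refine sum_congr rfl fun j _ ↦ ?_
        rw [binomialWeight, exp_sub, exp_neg, mul_comm c, exp_nat_mul]
        field_simp
        ring
    _ ≤ exp (-(c * a)) * exp (p * δ) ^ k := by
        gcongr
        linarith [add_one_le_exp (p * δ)]
    _ = exp (p * k * (δ - (1 + δ) * c)) := by
        rw [← exp_nat_mul, ← exp_add, ha]
        ring_nf

lemma sum_binomialWeight_upper_tail_le (hp0 : 0 ≤ p) (hp1 : p ≤ 1) {ε : ℝ} (hε0 : 0 ≤ ε)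
    (hε1 : ε ≤ 1) :
    ∑ j ∈ range (k + 1) with (1 + ε) * (p * k) < ((j : ℕ) : ℝ), binomialWeight k p j
      ≤ exp (-(ε ^ 2 * (p * k)) / 3) := by
  have hpk : 0 ≤ p * k := by positivity
  refine (sum_binomialWeight_filter_le_exp hp0 hp1 (by linarith) _ fun j hj ↦ ?_).trans ?_
  · exact mul_le_mul_of_nonneg_left hj.le (log_nonneg (by linarith))
  · have := self_add_sq_div_three_le_mul_log_one_add hε0 hε1
    gcongr
    nlinarith

lemma sum_binomialWeight_lower_tail_le (hp0 : 0 ≤ p) (hp1 : p ≤ 1) {ε : ℝ} (hε0 : 0 ≤ ε)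
    (hε1 : ε < 1) :
    ∑ j ∈ range (k + 1) with ((j : ℕ) : ℝ) < (1 - ε) * (p * k), binomialWeight k p j
      ≤ exp (-(ε ^ 2 * (p * k)) / 3) := by
  have hpk : 0 ≤ p * k := by positivity
  have hlog : log (1 + -ε) ≤ 0 := log_nonpos (by linarith) (by linarith)
  refine (sum_binomialWeight_filter_le_exp hp0 hp1 (δ := -ε) (by linarith) _
    fun j hj ↦ ?_).trans ?_
  · exact mul_le_mul_of_nonpos_left (by rw [← sub_eq_add_neg]; exact hj.le) hlog
  · have := neg_self_add_sq_div_two_le_mul_log_one_sub hε0 hε1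
    rw [← sub_eq_add_neg]
    gcongr
    nlinarith [mul_nonneg hpk (sq_nonneg ε)]

theorem sum_binomialWeight_deviation_le (hp0 : 0 ≤ p) (hp1 : p ≤ 1) {ε : ℝ} (hε0 : 0 ≤ ε)
    (hε1 : ε < 1) :
    ∑ j ∈ range (k + 1) with ε * (p * k) < |((j : ℕ) : ℝ) - p * k|, binomialWeight k p j
      ≤ 2 * exp (-(ε ^ 2 * (p * k)) / 3) := by
  calc ∑ j ∈ range (k + 1) with ε * (p * k) < |((j : ℕ) : ℝ) - p * k|, binomialWeight k p j
      ≤ ∑ j ∈ range (k + 1) with (1 + ε) * (p * k) < ((j : ℕ) : ℝ), binomialWeight k p j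
        + ∑ j ∈ range (k + 1) with ((j : ℕ) : ℝ) < (1 - ε) * (p * k), binomialWeight k p j := by
        simp only [sum_filter, ← sum_add_distrib]
        gcongr with j
        have := binomialWeight_nonneg (k := k) hp0 hp1 j
        split_ifs with hdev hupper hlower hlower <;> try linarith
        rcases lt_abs.1 hdev with h | h
        · exact absurd (by linarith) hupper
        · exact absurd (by linarith) hlower
    _ ≤ 2 * exp (-(ε ^ 2 * (p * k)) / 3) := by
      linarith [sum_binomialWeight_upper_tail_le (k := k) hp0 hp1 hε0 hε1.le,
        sum_binomialWeight_lower_tail_le (k := k) hp0 hp1 hε0 hε1]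

theorem sum_binomialWeight_deviation_min_le {r ε : ℝ} (hr : 0 ≤ r) (hε0 : 0 ≤ ε) (hε1 : ε < 1) :
    ∑ j ∈ range (k + 1) with ε * (min r 1 * k) < |((j : ℕ) : ℝ) - min r 1 * k|,
      binomialWeight k (min r 1) j ≤ 2 * exp (-(ε ^ 2 * (r * k)) / 3) := by
  rcases le_total r 1 with h | h
  · rw [min_eq_left h]
    exact sum_binomialWeight_deviation_le hr h hε0 hε1
  · rw [min_eq_right h]
    refine (sum_eq_zero fun j hj ↦ ?_).trans_le (by positivity)
    obtain ⟨hjk, hdev⟩ := mem_filter.1 hj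
    have hjk' : j ≠ k := by
      rintro rfl
      simp only [one_mul, sub_self, abs_zero] at hdev
      exact hdev.not_ge (by positivity)
    rw [binomialWeight, sub_self, zero_pow (by rw [mem_range] at hjk; omega), mul_zero]

end Binomial

section RandomSubset

variable {α : Type*} [DecidableEq α] {p : ℝ} {a : α} {E F S : Finset α}

/-- The probability that the random subset of `E` keeping each element independently with
probability `p` equals `S`; sums against it over `E.powerset` are expectations. -/
def bernoulliWeight (p : ℝ) (E S : Finset α) : ℝ := (∏ _e ∈ S, p) * ∏ _e ∈ E \ S, (1 - p)

lemma bernoulliWeight_nonneg (hp0 : 0 ≤ p) (hp1 : p ≤ 1) (E S : Finset α) :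
    0 ≤ bernoulliWeight p E S :=
  mul_nonneg (prod_nonneg fun _ _ ↦ hp0) (prod_nonneg fun _ _ ↦ sub_nonneg.2 hp1)

lemma bernoulliWeight_insert (ha : a ∉ E) (hS : S ⊆ E) :
    bernoulliWeight p (insert a E) S = (1 - p) * bernoulliWeight p E S := by
  rw [bernoulliWeight, bernoulliWeight, insert_sdiff_of_notMem _ fun h ↦ ha (hS h),
    prod_insert fun h ↦ ha (sdiff_subset h)]
  ring

lemma bernoulliWeight_insert_insert (ha : a ∉ E) (hS : S ⊆ E) :
    bernoulliWeight p (insert a E) (insert a S) = p * bernoulliWeight p E S := by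
  rw [bernoulliWeight, bernoulliWeight, insert_sdiff_insert, sdiff_insert_of_notMem ha,
    prod_insert fun h ↦ ha (hS h)]
  ring

lemma sum_powerset_mul_bernoulliWeight_self (f : ℕ → ℝ) :
    ∑ S ∈ F.powerset, f #S * bernoulliWeight p F S
      = ∑ j ∈ range (#F + 1), f j * binomialWeight #F p j := by
  calc ∑ S ∈ F.powerset, f #S * bernoulliWeight p F S
      = ∑ S ∈ F.powerset, f #S * (p ^ #S * (1 - p) ^ (#F - #S)) := by
        refine sum_congr rfl fun S hS ↦ ?_
        rw [bernoulliWeight, prod_const, prod_const, card_sdiff_of_subset (mem_powerset.1 hS)]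
    _ = ∑ j ∈ range (#F + 1), f j * binomialWeight #F p j := by
        rw [sum_powerset_apply_card (fun j ↦ f j * (p ^ j * (1 - p) ^ (#F - j)))]
        refine sum_congr rfl fun j _ ↦ ?_
        rw [nsmul_eq_mul, binomialWeight]
        ring

theorem sum_powerset_mul_bernoulliWeight (hFE : F ⊆ E) (f : ℕ → ℝ) :
    ∑ S ∈ E.powerset, f #(S ∩ F) * bernoulliWeight p E S
      = ∑ j ∈ range (#F + 1), f j * binomialWeight #F p j := by
  suffices h : ∀ D : Finset α, Disjoint F D →
      ∑ S ∈ (F ∪ D).powerset, f #(S ∩ F) * bernoulliWeight p (F ∪ D) S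
        = ∑ S ∈ F.powerset, f #S * bernoulliWeight p F S by
    rw [← union_sdiff_of_subset hFE, h _ disjoint_sdiff, sum_powerset_mul_bernoulliWeight_self]
  intro D
  induction D using Finset.induction_on with
  | empty =>
    intro
    rw [union_empty]
    exact sum_congr rfl fun S hS ↦ by rw [inter_eq_left.2 (mem_powerset.1 hS)]
  | insert a D ha ih =>
    intro hFD
    rw [disjoint_insert_right] at hFD
    have haFD : a ∉ F ∪ D := by simp [ha, hFD.1]
    rw [union_insert, sum_powerset_insert haFD, ← ih hFD.2, ← sum_add_distrib]
    refine sum_congr rfl fun S hS ↦ ?_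
    have hS := mem_powerset.1 hS
    rw [insert_inter_of_notMem hFD.1, bernoulliWeight_insert haFD hS,
      bernoulliWeight_insert_insert haFD hS]
    ring

lemma sum_powerset_filter_bernoulliWeight (hFE : F ⊆ E) (P : ℕ → Prop) [DecidablePred P] :
    ∑ S ∈ E.powerset with P #(S ∩ F), bernoulliWeight p E S
      = ∑ j ∈ range (#F + 1) with P j, binomialWeight #F p j := by
  simpa only [sum_filter, ite_mul, one_mul, zero_mul] using
    sum_powerset_mul_bernoulliWeight (p := p) hFE (fun j ↦ if P j then 1 else 0)

lemma sum_powerset_bernoulliWeight (p : ℝ) (E : Finset α) :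
    ∑ S ∈ E.powerset, bernoulliWeight p E S = 1 := by
  simpa [binomialWeight] using
    sum_powerset_filter_bernoulliWeight (p := p) (empty_subset E) fun _ ↦ True

theorem sum_bernoulliWeight_deviation_le (hFE : F ⊆ E) {r ε : ℝ} (hr : 0 ≤ r) (hε0 : 0 ≤ ε)
    (hε1 : ε < 1) :
    ∑ S ∈ E.powerset with ε * (min r 1 * #F) < |(#(S ∩ F) : ℝ) - min r 1 * #F|,
      bernoulliWeight (min r 1) E S ≤ 2 * Real.exp (-(ε ^ 2 * (r * #F)) / 3) := by
  rw [sum_powerset_filter_bernoulliWeight hFE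
    (fun j ↦ ε * (min r 1 * #F) < |(j : ℝ) - min r 1 * #F|)]
  exact sum_binomialWeight_deviation_min_le hr hε0 hε1

end RandomSubset

lemma one_sub_sum_sum_filter_le_sum_filter_forall {σ ι : Type*} {Ω : Finset σ} {μ : σ → ℝ}
    (hμ0 : ∀ S ∈ Ω, 0 ≤ μ S) (hμ1 : ∑ S ∈ Ω, μ S = 1) (𝒜 : Finset ι) (Q : ι → σ → Prop)
    [∀ A S, Decidable (Q A S)] :
    1 - ∑ A ∈ 𝒜, ∑ S ∈ Ω with ¬ Q A S, μ S ≤ ∑ S ∈ Ω with ∀ A ∈ 𝒜, Q A S, μ S := by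
  rw [← hμ1, ← sum_filter_add_sum_filter_not Ω (fun S ↦ ∀ A ∈ 𝒜, Q A S)]
  suffices ∑ S ∈ Ω with ¬ ∀ A ∈ 𝒜, Q A S, μ S ≤ ∑ A ∈ 𝒜, ∑ S ∈ Ω with ¬ Q A S, μ S by linarith
  have hinner : ∀ S ∈ Ω, 0 ≤ ∑ A ∈ 𝒜 with ¬ Q A S, μ S :=
    fun S hS ↦ sum_nonneg fun _ _ ↦ hμ0 S hS
  calc ∑ S ∈ Ω with ¬ ∀ A ∈ 𝒜, Q A S, μ S
      ≤ ∑ S ∈ Ω with ¬ ∀ A ∈ 𝒜, Q A S, ∑ A ∈ 𝒜 with ¬ Q A S, μ S := by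
        refine sum_le_sum fun S hS ↦ ?_
        obtain ⟨hSΩ, hbad⟩ := mem_filter.1 hS
        push Not at hbad
        obtain ⟨A, hA, hQ⟩ := hbad
        exact single_le_sum (f := fun _ ↦ μ S) (fun _ _ ↦ hμ0 S hSΩ) (mem_filter.2 ⟨hA, hQ⟩)
    _ ≤ ∑ S ∈ Ω, ∑ A ∈ 𝒜 with ¬ Q A S, μ S :=
        sum_le_sum_of_subset_of_nonneg (filter_subset _ _) fun S hS _ ↦ hinner S hS
    _ = ∑ A ∈ 𝒜, ∑ S ∈ Ω with ¬ Q A S, μ S := by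
        simp only [sum_filter]
        exact sum_comm

section CutCounting

variable {V ι : Type*} [Fintype V] [DecidableEq V] [DecidableEq ι] {G : SimpleGraph V}
  {π : V → ι} {A : Finset V} {s t β : ℕ}

lemma mk_mem_cutEdges {u v : V} : s(u, v) ∈ cutEdges G A ↔ G.Adj u v ∧ (u ∈ A ↔ v ∉ A) := by
  simp only [cutEdges, mem_filter, SimpleGraph.mem_edgeFinset, SimpleGraph.mem_edgeSet,
    mem_compl, Sym2.eq_iff]
  constructor
  · rintro ⟨hadj, x, hx, y, hy, ⟨rfl, rfl⟩ | ⟨rfl, rfl⟩⟩ <;> tauto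
  · rintro ⟨hadj, h⟩
    by_cases hu : u ∈ A
    · exact ⟨hadj, u, hu, v, h.1 hu, .inl ⟨rfl, rfl⟩⟩
    · exact ⟨hadj, v, not_not.1 (mt h.2 hu), u, hu, .inr ⟨rfl, rfl⟩⟩

/- A partition of `V` is encoded by a map `π : V → ι`: its blocks are the fibres of `π`, and
merging two blocks composes `π` with a map identifying two values. -/

def IsSaturated (π : V → ι) (A : Finset V) : Prop := ∀ u v, π u = π v → (u ∈ A ↔ v ∈ A)

variable (G) in
noncomputable def smallCuts (π : V → ι) (s : ℕ) : Finset (Finset V) :=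
  {A | IsSaturated π A ∧ #(cutEdges G A) ≤ s}

variable (G) in
noncomputable def crossingEdges (π : V → ι) : Finset (Sym2 V) :=
  {e ∈ G.edgeFinset | ¬ (e.map π).IsDiag}

lemma IsSaturated.cutEdges_subset (hA : IsSaturated π A) :
    cutEdges G A ⊆ crossingEdges G π := by
  intro e he
  induction e using Sym2.ind with
  | _ u v =>
    rw [mk_mem_cutEdges] at he
    have := hA u v
    simp only [crossingEdges, mem_filter, SimpleGraph.mem_edgeFinset, SimpleGraph.mem_edgeSet,
      Sym2.map_mk, Sym2.mk_isDiag_iff]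
    tauto

lemma card_smallCuts_le_two_pow : #(smallCuts G π s) ≤ 2 ^ #(univ.image π) := by
  have hmem : ∀ C ∈ (smallCuts G π s : Set (Finset V)), ∀ v, v ∈ C ↔ π v ∈ C.image π := by
    intro C hC v
    simp only [smallCuts, coe_filter, Set.mem_ofPred_eq, mem_univ, true_and] at hC
    refine ⟨mem_image_of_mem π, fun h ↦ ?_⟩
    obtain ⟨w, hw, hwv⟩ := mem_image.1 h
    exact (hC.1 w v hwv).1 hw
  rw [← card_powerset]
  refine card_le_card_of_injOn (fun A ↦ A.image π)
    (fun A _ ↦ mem_powerset.2 (image_subset_image (subset_univ A))) fun A hA B hB hAB ↦ ?_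
  ext v
  rw [hmem A hA, hmem B hB, show A.image π = B.image π from hAB]

lemma sum_card_cutEdges_fiber_le :
    ∑ x ∈ univ.image π, #(cutEdges G {v | π v = x}) ≤ 2 * #(crossingEdges G π) := by
  calc ∑ x ∈ univ.image π, #(cutEdges G {v | π v = x})
      = ∑ x ∈ univ.image π, #{e ∈ crossingEdges G π | e ∈ cutEdges G {v | π v = x}} := by
        refine sum_congr rfl fun x _ ↦ ?_
        have hsat : IsSaturated π {v | π v = x} := fun u v h ↦ by simp [h]
        rw [filter_mem_eq_inter, inter_eq_right.2 hsat.cutEdges_subset]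
    _ = ∑ e ∈ crossingEdges G π, #{x ∈ univ.image π | e ∈ cutEdges G {v | π v = x}} :=
        sum_card_bipartiteAbove_eq_sum_card_bipartiteBelow _
    _ ≤ ∑ e ∈ crossingEdges G π, 2 := by
        refine sum_le_sum fun e _ ↦ ?_
        induction e using Sym2.ind with
        | _ u v =>
          refine (card_le_card (t := {π u, π v}) fun x hx ↦ ?_).trans card_le_two
          have := mk_mem_cutEdges.1 (mem_filter.1 hx).2
          simp only [mem_filter, mem_univ, true_and] at this
          simp only [mem_insert, mem_singleton]
          tauto
    _ = 2 * #(crossingEdges G π) := by rw [sum_const, smul_eq_mul, mul_comm]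

lemma card_image_mul_le_two_mul_card_crossingEdges
    (hmin : ∀ A : Finset V, A.Nonempty → A ≠ univ → t ≤ #(cutEdges G A))
    (hb : 2 ≤ #(univ.image π)) : #(univ.image π) * t ≤ 2 * #(crossingEdges G π) := by
  have hfiber : ∀ x ∈ univ.image π, t ≤ #(cutEdges G {v | π v = x}) := by
    intro x hx
    obtain ⟨y, hy, hyx⟩ := exists_mem_ne (by omega : 1 < #(univ.image π)) x
    obtain ⟨u, -, rfl⟩ := mem_image.1 hx
    obtain ⟨w, -, rfl⟩ := mem_image.1 hy
    refine hmin _ ⟨u, by simp⟩ fun h ↦ hyx ?_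
    have : w ∈ ({v | π v = π u} : Finset V) := by rw [h]; exact mem_univ w
    simpa using this
  rw [← smul_eq_mul]
  exact (card_nsmul_le_sum _ _ _ hfiber).trans sum_card_cutEdges_fiber_le

lemma exists_merge_of_mem_crossingEdges {e : Sym2 V} (he : e ∈ crossingEdges G π) :
    ∃ π' : V → ι, #(univ.image π') + 1 = #(univ.image π) ∧
      ∀ A, IsSaturated π A → e ∉ cutEdges G A → IsSaturated π' A := by
  induction e using Sym2.ind with
  | _ u v =>
  simp only [crossingEdges, mem_filter, SimpleGraph.mem_edgeFinset, SimpleGraph.mem_edgeSet,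
    Sym2.map_mk, Sym2.mk_isDiag_iff] at he
  refine ⟨fun w ↦ if π w = π v then π u else π w, ?_, fun A hA hnot ↦ ?_⟩
  · have himage : univ.image (fun w ↦ if π w = π v then π u else π w)
        = (univ.image π).erase (π v) := by
      ext x
      simp only [mem_image, mem_univ, true_and, mem_erase]
      constructor
      · rintro ⟨w, rfl⟩
        split_ifs with h
        · exact ⟨he.2, u, rfl⟩
        · exact ⟨h, w, rfl⟩
      · rintro ⟨hx, w, rfl⟩
        exact ⟨w, if_neg hx⟩
    rw [himage, card_erase_add_one (mem_image_of_mem π (mem_univ v))]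
  · have huv : u ∈ A ↔ v ∈ A := by
      rw [mk_mem_cutEdges] at hnot
      tauto
    grind [IsSaturated]

lemma sub_mul_card_smallCuts_le (ht : 1 ≤ t)
    (hmin : ∀ A : Finset V, A.Nonempty → A ≠ univ → t ≤ #(cutEdges G A)) (hβ : 0 < β)
    (hs : s ≤ β * t) (hb : 2 * β < #(univ.image π)) {N : ℕ}
    (hN : ∀ π' : V → ι, #(univ.image π') + 1 = #(univ.image π) → #(smallCuts G π' s) ≤ N) :
    (#(univ.image π) - 2 * β) * #(smallCuts G π s) ≤ #(univ.image π) * N := by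
  set b := #(univ.image π)
  set m := #(crossingEdges G π)
  have hbm : b * t ≤ 2 * m := card_image_mul_le_two_mul_card_crossingEdges hmin (by omega)
  have hm : 0 < m := by nlinarith
  have hmissed : ∀ A ∈ smallCuts G π s,
      (b - 2 * β) * m ≤ b * #{e ∈ crossingEdges G π | e ∉ cutEdges G A} := by
    intro A hA
    simp only [smallCuts, mem_filter, mem_univ, true_and] at hA
    have hsub := hA.1.cutEdges_subset (G := G)
    rw [← sdiff_eq_filter, card_sdiff_of_subset hsub]
    have hcm := card_le_card hsub
    have hbc : b * #(cutEdges G A) ≤ b * (β * t) := Nat.mul_le_mul_left b (hA.2.trans hs)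
    zify [hb.le, hcm] at hbc hbm ⊢
    nlinarith
  have hcovered : ∀ e ∈ crossingEdges G π, #{A ∈ smallCuts G π s | e ∉ cutEdges G A} ≤ N := by
    intro e he
    obtain ⟨π', hπ', hsat⟩ := exists_merge_of_mem_crossingEdges he
    refine (card_le_card fun A hA ↦ ?_).trans (hN π' hπ')
    simp only [smallCuts, mem_filter, mem_univ, true_and] at hA ⊢
    exact ⟨hsat A hA.1.1 hA.2, hA.1.2⟩
  refine Nat.le_of_mul_le_mul_left ?_ hm
  calc m * ((b - 2 * β) * #(smallCuts G π s))
      = #(smallCuts G π s) • ((b - 2 * β) * m) := by rw [smul_eq_mul]; ring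
    _ ≤ ∑ A ∈ smallCuts G π s, b * #{e ∈ crossingEdges G π | e ∉ cutEdges G A} :=
        card_nsmul_le_sum _ _ _ hmissed
    _ = b * ∑ e ∈ crossingEdges G π, #{A ∈ smallCuts G π s | e ∉ cutEdges G A} := by
        rw [← mul_sum]
        exact congrArg (b * ·) (sum_card_bipartiteAbove_eq_sum_card_bipartiteBelow _)
    _ ≤ b * (m • N) := Nat.mul_le_mul_left b (sum_le_card_nsmul _ _ _ hcovered)
    _ = m * (b * N) := by rw [smul_eq_mul]; ring

theorem card_smallCuts_le (ht : 1 ≤ t)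
    (hmin : ∀ A : Finset V, A.Nonempty → A ≠ univ → t ≤ #(cutEdges G A)) (hβ : 0 < β)
    (hs : s ≤ β * t) (π : V → ι) :
    #(smallCuts G π s) ≤ 2 ^ (2 * β) * (max #(univ.image π) (2 * β)).choose (2 * β) := by
  induction h : #(univ.image π) using Nat.strong_induction_on generalizing π with
  | _ b ih =>
  rcases le_or_gt b (2 * β) with hb | hb
  · rw [max_eq_right hb, Nat.choose_self, mul_one]
    exact card_smallCuts_le_two_pow.trans (Nat.pow_le_pow_right two_pos (h ▸ hb))
  · have hN : ∀ π' : V → ι, #(univ.image π') + 1 = #(univ.image π) →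
        #(smallCuts G π' s) ≤ 2 ^ (2 * β) * (b - 1).choose (2 * β) := by
      intro π' hπ'
      have := ih (b - 1) (by omega) π' (by omega)
      rwa [max_eq_left (by omega)] at this
    have hstep := sub_mul_card_smallCuts_le ht hmin hβ hs (h ▸ hb) hN
    rw [h] at hstep
    have hchoose : b * (b - 1).choose (2 * β) = (b - 2 * β) * b.choose (2 * β) := by
      have := Nat.choose_mul_succ_eq (b - 1) (2 * β)
      rw [Nat.sub_add_cancel (by omega)] at this
      rw [mul_comm, this, mul_comm]
    rw [max_eq_left hb.le]
    refine Nat.le_of_mul_le_mul_left (c := b - 2 * β) ?_ (by omega)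
    calc (b - 2 * β) * #(smallCuts G π s)
        ≤ b * (2 ^ (2 * β) * (b - 1).choose (2 * β)) := hstep
      _ = (b - 2 * β) * (2 ^ (2 * β) * b.choose (2 * β)) := by
        rw [mul_left_comm, hchoose]
        ring

theorem card_filter_card_cutEdges_le_pow (ht : 1 ≤ t)
    (hmin : ∀ A : Finset V, A.Nonempty → A ≠ univ → t ≤ #(cutEdges G A)) (hβ : 0 < β)
    (hV : 2 ≤ Fintype.card V) :
    #{A : Finset V | #(cutEdges G A) ≤ β * t} ≤ Fintype.card V ^ (4 * β) := by
  have hsmall : ({A : Finset V | #(cutEdges G A) ≤ β * t} : Finset (Finset V))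
      = smallCuts G id (β * t) := by
    ext A
    simp [smallCuts, IsSaturated]
  rw [hsmall]
  refine (card_smallCuts_le ht hmin hβ le_rfl id).trans ?_
  rw [image_id, card_univ]
  set n := Fintype.card V
  rcases le_or_gt (2 * β) n with h | h
  · rw [max_eq_left h]
    calc 2 ^ (2 * β) * n.choose (2 * β) ≤ n ^ (2 * β) * n ^ (2 * β) :=
          Nat.mul_le_mul (Nat.pow_le_pow_left hV _) (Nat.choose_le_pow n _)
      _ = n ^ (4 * β) := by rw [← pow_add]; ring_nf
  · rw [max_eq_right h.le, Nat.choose_self, mul_one]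
    exact (Nat.pow_le_pow_left hV _).trans (Nat.pow_le_pow_right (by omega) (by omega))

end CutCounting

lemma exp_neg_le_inv_pow_div {n : ℕ} (hn : 1 ≤ n) (k d : ℕ) :
    Real.exp (-(200 / 3 * Real.log n * k / d)) ≤ ((n : ℝ) ^ (66 * (k / d)))⁻¹ := by
  have hlog : 0 ≤ Real.log n := Real.log_nonneg (by exact_mod_cast hn)
  have hdiv : ((k / d : ℕ) : ℝ) ≤ k / d := Nat.cast_div_le
  rw [← Real.exp_log (by positivity : (0 : ℝ) < n), ← Real.exp_nat_mul, ← Real.exp_neg,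
    Real.exp_le_exp, neg_le_neg_iff, Real.log_exp]
  push_cast
  calc 66 * ((k / d : ℕ) : ℝ) * Real.log n ≤ 200 / 3 * (k / d) * Real.log n := by
        gcongr
        · norm_num
    _ = 200 / 3 * Real.log n * k / d := by ring

lemma sum_two_mul_inv_pow_le {ι : Type*} (𝒜 : Finset ι) (c : ι → ℕ) {n : ℕ} (hn : 2 ≤ n)
    (hc : ∀ A ∈ 𝒜, c A ∈ Icc 1 (n ^ 2))
    (hcard : ∀ j, #{A ∈ 𝒜 | c A = j} ≤ n ^ (4 * (j + 1))) :
    ∑ A ∈ 𝒜, 2 * ((n : ℝ) ^ (66 * c A))⁻¹ ≤ (n : ℝ) ^ (-10 : ℤ) := by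
  have hn0 : (0 : ℝ) < n := by positivity
  have hclass : ∀ j ∈ Icc 1 (n ^ 2),
      ∑ A ∈ 𝒜 with c A = j, 2 * ((n : ℝ) ^ (66 * c A))⁻¹ ≤ ((n : ℝ) ^ 12)⁻¹ := by
    intro j hj
    have hj1 := (mem_Icc.1 hj).1
    have hpow : 2 * n ^ (4 * (j + 1)) * n ^ 12 ≤ n ^ (66 * j) :=
      calc 2 * n ^ (4 * (j + 1)) * n ^ 12 ≤ n * n ^ (4 * (j + 1)) * n ^ 12 := by gcongr
        _ = n ^ (4 * j + 17) := by ring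
        _ ≤ n ^ (66 * j) := Nat.pow_le_pow_right (by omega) (by omega)
    rw [sum_congr rfl fun A hA ↦ by rw [(mem_filter.1 hA).2], sum_const, nsmul_eq_mul,
      ← mul_assoc, mul_comm _ (2 : ℝ), ← div_eq_mul_inv, div_le_iff₀ (by positivity),
      inv_mul_eq_div, le_div_iff₀ (by positivity)]
    calc 2 * (#{A ∈ 𝒜 | c A = j} : ℝ) * (n : ℝ) ^ 12
        ≤ 2 * (n : ℝ) ^ (4 * (j + 1)) * (n : ℝ) ^ 12 := by gcongr; exact_mod_cast hcard j
      _ ≤ (n : ℝ) ^ (66 * j) := by exact_mod_cast hpow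
  calc ∑ A ∈ 𝒜, 2 * ((n : ℝ) ^ (66 * c A))⁻¹
      = ∑ j ∈ Icc 1 (n ^ 2), ∑ A ∈ 𝒜 with c A = j, 2 * ((n : ℝ) ^ (66 * c A))⁻¹ :=
        (sum_fiberwise_of_maps_to hc _).symm
    _ ≤ ∑ j ∈ Icc 1 (n ^ 2), ((n : ℝ) ^ 12)⁻¹ := sum_le_sum hclass
    _ = (n : ℝ) ^ (-10 : ℤ) := by
        rw [sum_const, Nat.card_Icc, nsmul_eq_mul, add_tsub_cancel_right, zpow_neg,
          show (10 : ℤ) = (10 : ℕ) by rfl, zpow_natCast]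
        push_cast
        field_simp

section Sparsification

variable {V : Type*} [Fintype V] [DecidableEq V] {G : SimpleGraph V}

lemma cutEdges_subset_edgeFinset (A : Finset V) : cutEdges G A ⊆ G.edgeFinset :=
  filter_subset _ _

lemma filter_eq_inter_cutEdges {S : Finset (Sym2 V)} (hS : S ⊆ G.edgeFinset) (A : Finset V) :
    S.filter (fun e => ∃ u ∈ A, ∃ v ∈ Aᶜ, e = s(u, v)) = S ∩ cutEdges G A := by
  rw [cutEdges, inter_filter, inter_eq_left.2 hS]

theorem sum_bernoulliWeight_cut_deviation_le (A : Finset V) {r ε : ℝ} (hr : 0 ≤ r)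
    (hε0 : 0 ≤ ε) (hε1 : ε < 1) :
    ∑ S ∈ G.edgeFinset.powerset with
        ¬ |(#(S.filter fun e => ∃ u ∈ A, ∃ v ∈ Aᶜ, e = s(u, v)) : ℝ)
          - min r 1 * #(cutEdges G A)| ≤ ε * (min r 1 * #(cutEdges G A)),
      bernoulliWeight (min r 1) G.edgeFinset S
      ≤ 2 * Real.exp (-(ε ^ 2 * (r * #(cutEdges G A))) / 3) := by
  refine le_of_eq_of_le (sum_congr (filter_congr fun S hS ↦ ?_) fun _ _ ↦ rfl)
    (sum_bernoulliWeight_deviation_le (cutEdges_subset_edgeFinset A) hr hε0 hε1)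
  rw [filter_eq_inter_cutEdges (mem_powerset.1 hS), not_le]

theorem sum_exp_neg_card_cutEdges_le {n t that : ℕ} (hn : Fintype.card V = n) (hn2 : 2 ≤ n)
    (hthat1 : 1 ≤ that) (hthatle : that ≤ t)
    (hmin : ∀ A : Finset V, A.Nonempty → A ≠ univ → t ≤ #(cutEdges G A)) :
    ∑ A ∈ ({A | A.Nonempty ∧ A ≠ univ} : Finset (Finset V)),
      2 * Real.exp (-(200 / 3 * Real.log n * #(cutEdges G A) / that))
      ≤ (n : ℝ) ^ (-10 : ℤ) := by
  refine (sum_le_sum fun A _ ↦ mul_le_mul_of_nonneg_left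
    (exp_neg_le_inv_pow_div (by omega) _ _) zero_le_two).trans
    (sum_two_mul_inv_pow_le _ _ hn2 (fun A hA ↦ ?_) fun j ↦ ?_)
  · simp only [mem_filter, mem_univ, true_and] at hA
    have := hmin A hA.1 hA.2
    rw [mem_Icc, Nat.one_le_div_iff (by omega)]
    refine ⟨by omega, (Nat.div_le_self _ _).trans ?_⟩
    calc #(cutEdges G A) ≤ #G.edgeFinset := card_le_card (cutEdges_subset_edgeFinset A)
      _ ≤ n.choose 2 := hn ▸ G.card_edgeFinset_le_card_choose_two
      _ ≤ n ^ 2 := Nat.choose_le_pow n 2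
  · refine (card_le_card fun A hA ↦ ?_).trans (hn ▸ card_filter_card_cutEdges_le_pow
      (by omega) hmin j.succ_pos (by omega))
    simp only [mem_filter, mem_univ, true_and] at hA ⊢
    have hlt : #(cutEdges G A) < (j + 1) * that := by
      rw [← Nat.div_lt_iff_lt_mul (by omega), hA.2]
      omega
    exact hlt.le.trans (Nat.mul_le_mul_left _ hthatle)

end Sparsification

theorem stmt6_general {V : Type*} [Fintype V] [DecidableEq V] (G : SimpleGraph V)
    (n : ℕ) (hn : Fintype.card V = n) (hn2 : 2 ≤ n)
    (t that : ℕ) (hthat1 : 1 ≤ that) (hthatle : that ≤ t)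
    (hmin : ∀ A : Finset V, A.Nonempty → A ≠ Finset.univ → t ≤ (cutEdges G A).card)
    (ε : ℝ) (hε0 : 0 < ε) (hε1 : ε < 1)
    (p : ℝ) (hp : p = min (200 * Real.log n / (ε ^ 2 * that)) 1) :
    (1 : ℝ) - (n : ℝ) ^ (-10 : ℤ) ≤
      ∑ S ∈ G.edgeFinset.powerset,
        (if ∀ A : Finset V, A.Nonempty → A ≠ Finset.univ →
            |((S.filter (fun e => ∃ u ∈ A, ∃ v ∈ Aᶜ, e = s(u, v))).card : ℝ)
              - p * ((cutEdges G A).card : ℝ)| ≤ ε * (p * ((cutEdges G A).card : ℝ))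
          then (∏ e ∈ S, p) * (∏ e ∈ G.edgeFinset \ S, (1 - p)) else 0) := by
  have hr : 0 ≤ 200 * Real.log n / (ε ^ 2 * that) := by positivity
  have hp01 : 0 ≤ p ∧ p ≤ 1 := hp ▸ ⟨le_min hr zero_le_one, min_le_right _ _⟩
  have hdev : ∀ A ∈ ({A | A.Nonempty ∧ A ≠ univ} : Finset (Finset V)),
      ∑ S ∈ G.edgeFinset.powerset with
        ¬ |(#(S.filter fun e => ∃ u ∈ A, ∃ v ∈ Aᶜ, e = s(u, v)) : ℝ) - p * #(cutEdges G A)|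
          ≤ ε * (p * #(cutEdges G A)), bernoulliWeight p G.edgeFinset S
        ≤ 2 * Real.exp (-(200 / 3 * Real.log n * #(cutEdges G A) / that)) := by
    intro A _
    convert hp ▸ sum_bernoulliWeight_cut_deviation_le (G := G) A hr hε0.le hε1 using 3
    field_simp
  refine (sub_le_sub_left ((sum_le_sum hdev).trans
    (sum_exp_neg_card_cutEdges_le hn hn2 hthat1 hthatle hmin)) 1).trans
    ((one_sub_sum_sum_filter_le_sum_filter_forall
      (fun S _ ↦ bernoulliWeight_nonneg hp01.1 hp01.2 _ S)
      (sum_powerset_bernoulliWeight p _) _ _).trans_eq ?_)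
  rw [sum_filter]
  refine sum_congr rfl fun S _ ↦ ?_
  congr 1
  simp

/-- If `G` is connected on `n ≥ 2` vertices with minimum cut size `t`, `t̂ ≤ t`, and `H`
keeps each edge independently with probability `p = min{200 log n/(ε² t̂), 1}`, then with
probability at least `1 − n⁻¹⁰`, simultaneously every cut of `G` of size `k` has size
within `(1 ± ε)·p·k` in `H`. -/
theorem stmt6 {V : Type*} [Fintype V] [DecidableEq V] (G : SimpleGraph V)
    (hG : G.Connected) (n : ℕ) (hn : Fintype.card V = n) (hn2 : 2 ≤ n)
    (t that : ℕ) (hthat1 : 1 ≤ that) (hthatle : that ≤ t)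
    (hmin : ∀ A : Finset V, A.Nonempty → A ≠ Finset.univ → t ≤ (cutEdges G A).card)
    (hex : ∃ A : Finset V, A.Nonempty ∧ A ≠ Finset.univ ∧ (cutEdges G A).card = t)
    (ε : ℝ) (hε0 : 0 < ε) (hε1 : ε < 1)
    (p : ℝ) (hp : p = min (200 * Real.log n / (ε ^ 2 * that)) 1) :
    (1 : ℝ) - (n : ℝ) ^ (-10 : ℤ) ≤
      ∑ S ∈ G.edgeFinset.powerset,
        (if ∀ A : Finset V, A.Nonempty → A ≠ Finset.univ →
            |((S.filter (fun e => ∃ u ∈ A, ∃ v ∈ Aᶜ, e = s(u, v))).card : ℝ)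
              - p * ((cutEdges G A).card : ℝ)| ≤ ε * (p * ((cutEdges G A).card : ℝ))
          then (∏ e ∈ S, p) * (∏ e ∈ G.edgeFinset \ S, (1 - p)) else 0) :=
  stmt6_general G n hn hn2 t that hthat1 hthatle hmin ε hε0 hε1 p hp
end

section
/- In a bipartite graph between S_A and T_A on parts of size s, in which the total number of missing edges (non-adjacent pairs) is t/2 and s ≥ 5t/2, every pair of vertices in S_A ∪ T_A is connected by at least 3t/2 edge-disjoint paths. -/
open Finset SimpleGraph

/-- There exist `k` pairwise edge-disjoint paths from `u` to `v` in `G`. -/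
def EdgeDisjointPaths {α : Type*} (G : SimpleGraph α) (u v : α) (k : ℕ) : Prop :=
  ∃ f : Fin k → G.Walk u v, (∀ a, (f a).IsPath) ∧
    ∀ a b, a ≠ b → ∀ e, e ∈ (f a).edges → e ∉ (f b).edges

/-- The bipartite graph between `S_A` (left) and `T_A` (right), each of size `s`,
where the edge `(s_i^A, t_j^A)` is present iff `z i j = false` (so `z` marks the
missing edges). -/
def bipGraph (s : ℕ) (z : Fin s → Fin s → Bool) : SimpleGraph (Fin s ⊕ Fin s) :=
  SimpleGraph.fromRel (fun u v =>
    match u, v with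
    | Sum.inl i, Sum.inr j => z i j = false
    | _, _ => False)

lemma bip_adj {s : ℕ} {z : Fin s → Fin s → Bool} {i j : Fin s}
    (h : z i j = false) : (bipGraph s z).Adj (Sum.inl i) (Sum.inr j) := by
  simp [bipGraph, SimpleGraph.fromRel_adj, h]

lemma exists_inj_of_card {s k : ℕ} (B : Fin k → Finset (Fin s))
    (hB : ∀ a, k ≤ (B a).card) :
    ∃ f : Fin k → Fin s, Function.Injective f ∧ ∀ a, f a ∈ B a := by
  rw [← Finset.all_card_le_biUnion_card_iff_exists_injective]
  intro A
  rcases A.eq_empty_or_nonempty with h | ⟨a, ha⟩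
  · simp [h]
  · calc A.card ≤ Fintype.card (Fin k) := A.card_le_univ
      _ = k := Fintype.card_fin k
      _ ≤ (B a).card := hB a
      _ ≤ (A.biUnion B).card := Finset.card_le_card (fun x hx => Finset.mem_biUnion.mpr ⟨a, ha, hx⟩)

lemma EdgeDisjointPaths.symm {α : Type*} {G : SimpleGraph α} {u v : α} {k : ℕ}
    (h : EdgeDisjointPaths G u v k) : EdgeDisjointPaths G v u k := by
  obtain ⟨f, hp, hd⟩ := h
  exact ⟨fun a => (f a).reverse, fun a => (hp a).reverse,
    fun a b hab e hea heb => hd a b hab e (by simpa using hea) (by simpa using heb)⟩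

lemma card_good {s : ℕ} (p q : Fin s → Bool) :
    s - ((univ.filter (fun j => p j = true)).card + (univ.filter (fun j => q j = true)).card)
      ≤ (univ.filter (fun j => p j = false ∧ q j = false)).card := by
  have h1 : (univ.filter (fun j => ¬(p j = true ∨ q j = true))).card
      = s - (univ.filter (fun j => p j = true ∨ q j = true)).card := by
    have := Finset.card_filter_add_card_filter_not
      (s := (univ : Finset (Fin s))) (p := fun j => p j = true ∨ q j = true)
    simp only [Finset.card_univ, Fintype.card_fin] at this
    omega
  have h2 : (univ.filter (fun j => ¬(p j = true ∨ q j = true)))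
      = (univ.filter (fun j => p j = false ∧ q j = false)) := by
    apply Finset.filter_congr
    intro j _
    simp [not_or]
  have h3 : (univ.filter (fun j => p j = true ∨ q j = true)).card
      ≤ (univ.filter (fun j => p j = true)).card + (univ.filter (fun j => q j = true)).card := by
    rw [Finset.filter_or]
    exact Finset.card_union_le _ _
  rw [h2] at h1
  omega

lemma edp_ll {s : ℕ} {z : Fin s → Fin s → Bool} {i i' : Fin s} (hne : i ≠ i') (k : ℕ)
    (hcard : k ≤ (univ.filter (fun j => z i j = false ∧ z i' j = false)).card) :
    EdgeDisjointPaths (bipGraph s z) (Sum.inl i) (Sum.inl i') k := by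
  obtain ⟨f, hinj, hmem⟩ := exists_inj_of_card (fun _ => _) (fun _ => hcard)
  simp only [Finset.mem_filter, Finset.mem_univ, true_and] at hmem
  refine ⟨fun a => SimpleGraph.Walk.cons (bip_adj (hmem a).1)
    (SimpleGraph.Walk.cons (bip_adj (hmem a).2).symm SimpleGraph.Walk.nil), ?_, ?_⟩
  · intro a
    rw [SimpleGraph.Walk.isPath_def]
    simp [hne]
  · intro a b hab e hea heb
    have hf : f a ≠ f b := hinj.ne hab
    simp only [SimpleGraph.Walk.edges_cons, SimpleGraph.Walk.edges_nil, List.mem_cons,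
      List.not_mem_nil, or_false] at hea heb
    rcases hea with rfl | rfl <;> rcases heb with h | h <;>
      simp [Sym2.eq_iff, hf, hf.symm] at h

lemma edp_rr {s : ℕ} {z : Fin s → Fin s → Bool} {j j' : Fin s} (hne : j ≠ j') (k : ℕ)
    (hcard : k ≤ (univ.filter (fun i => z i j = false ∧ z i j' = false)).card) :
    EdgeDisjointPaths (bipGraph s z) (Sum.inr j) (Sum.inr j') k := by
  obtain ⟨f, hinj, hmem⟩ := exists_inj_of_card (fun _ => _) (fun _ => hcard)
  simp only [Finset.mem_filter, Finset.mem_univ, true_and] at hmem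
  refine ⟨fun a => SimpleGraph.Walk.cons (bip_adj (hmem a).1).symm
    (SimpleGraph.Walk.cons (bip_adj (hmem a).2) SimpleGraph.Walk.nil), ?_, ?_⟩
  · intro a
    rw [SimpleGraph.Walk.isPath_def]
    simp [hne]
  · intro a b hab e hea heb
    have hf : f a ≠ f b := hinj.ne hab
    simp only [SimpleGraph.Walk.edges_cons, SimpleGraph.Walk.edges_nil, List.mem_cons,
      List.not_mem_nil, or_false] at hea heb
    rcases hea with rfl | rfl <;> rcases heb with h | h <;>
      simp [Sym2.eq_iff, hf, hf.symm] at h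

lemma edp_lr {s : ℕ} {z : Fin s → Fin s → Bool} {i j : Fin s} (k : ℕ)
    (g h : Fin k → Fin s) (hginj : Function.Injective g) (hhinj : Function.Injective h)
    (hgi : ∀ a, g a ≠ i) (hgj : ∀ a, z (g a) j = false)
    (hhj : ∀ a, h a ≠ j) (hih : ∀ a, z i (h a) = false) (hgh : ∀ a, z (g a) (h a) = false) :
    EdgeDisjointPaths (bipGraph s z) (Sum.inl i) (Sum.inr j) k := by
  refine ⟨fun a => SimpleGraph.Walk.cons (bip_adj (hih a))
    (SimpleGraph.Walk.cons (bip_adj (hgh a)).symm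
      (SimpleGraph.Walk.cons (bip_adj (hgj a)) SimpleGraph.Walk.nil)), ?_, ?_⟩
  · intro a
    rw [SimpleGraph.Walk.isPath_def]
    simp [(hgi a).symm, hhj a]
  · intro a b hab e hea heb
    have hf : h a ≠ h b := hhinj.ne hab
    have hg' : g a ≠ g b := hginj.ne hab
    simp only [SimpleGraph.Walk.edges_cons, SimpleGraph.Walk.edges_nil, List.mem_cons,
      List.not_mem_nil, or_false] at hea heb
    rcases hea with rfl | rfl | rfl <;> rcases heb with h1 | h1 | h1 <;>
      simp [Sym2.eq_iff, hf, hf.symm, hg', hg'.symm, hhj a, hhj b, (hhj a).symm, (hhj b).symm,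
        hgi a, hgi b, (hgi a).symm, (hgi b).symm] at h1

lemma card_good1 {s : ℕ} (p : Fin s → Bool) :
    s - (univ.filter (fun j => p j = true)).card ≤ (univ.filter (fun j => p j = false)).card := by
  have h1 := Finset.card_filter_add_card_filter_not
      (s := (univ : Finset (Fin s))) (p := fun j => p j = true)
  simp only [Finset.card_univ, Fintype.card_fin] at h1
  have h2 : (univ.filter (fun j => ¬(p j = true)))
      = (univ.filter (fun j => p j = false)) := by
    apply Finset.filter_congr
    intro j _
    simp
  rw [h2] at h1
  omega

/-- In a bipartite graph between parts of size `s` in which the total number of missing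
edges is `t/2` (`t` even) and `s ≥ 5t/2`, every pair of distinct vertices is connected
by at least `3t/2` edge-disjoint paths. -/
theorem stmt11 (s t : ℕ) (ht : Even t) (hs : 5 * t ≤ 2 * s)
    (z : Fin s → Fin s → Bool)
    (hsum : (∑ i : Fin s, ∑ j : Fin s, (if z i j then 1 else 0)) = t / 2)
    (u v : Fin s ⊕ Fin s) (huv : u ≠ v) :
    EdgeDisjointPaths (bipGraph s z) u v (3 * t / 2) := by
  obtain ⟨m, rfl⟩ : ∃ m, t = 2 * m := by
    obtain ⟨r, hr⟩ := ht; exact ⟨r, by omega⟩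
  have hk : 3 * (2 * m) / 2 = 3 * m := by omega
  rw [hk]
  have hsm : 5 * m ≤ s := by omega
  have hm2 : (2 * m) / 2 = m := by omega
  rw [hm2] at hsum
  have hrow : ∑ i : Fin s, (univ.filter (fun j => z i j = true)).card = m := by
    rw [← hsum]
    refine Finset.sum_congr rfl fun i _ => ?_
    rw [Finset.card_filter]
  have hcol : ∑ j : Fin s, (univ.filter (fun i => z i j = true)).card = m := by
    calc ∑ j : Fin s, (univ.filter (fun i => z i j = true)).card
        = ∑ j : Fin s, ∑ i : Fin s, (if z i j then 1 else 0) := by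
          refine Finset.sum_congr rfl fun j _ => ?_
          rw [Finset.card_filter]
      _ = ∑ i : Fin s, ∑ j : Fin s, (if z i j then 1 else 0) := Finset.sum_comm
      _ = m := hsum
  have rowpair : ∀ {i i' : Fin s}, i ≠ i' →
      (univ.filter (fun j => z i j = true)).card
        + (univ.filter (fun j => z i' j = true)).card ≤ m := by
    intro i i' hne
    have h := Finset.sum_le_sum_of_subset
      (f := fun i => (univ.filter (fun j => z i j = true)).card)
      (Finset.subset_univ {i, i'})
    rw [Finset.sum_pair hne, hrow] at h
    exact h
  have colpair : ∀ {j j' : Fin s}, j ≠ j' →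
      (univ.filter (fun i => z i j = true)).card
        + (univ.filter (fun i => z i j' = true)).card ≤ m := by
    intro j j' hne
    have h := Finset.sum_le_sum_of_subset
      (f := fun j => (univ.filter (fun i => z i j = true)).card)
      (Finset.subset_univ {j, j'})
    rw [Finset.sum_pair hne, hcol] at h
    exact h
  have colsingle : ∀ (j : Fin s), (univ.filter (fun i => z i j = true)).card ≤ m := by
    intro j
    rw [← hcol]
    exact Finset.single_le_sum (f := fun j => (univ.filter (fun i => z i j = true)).card)
      (fun _ _ => Nat.zero_le _) (Finset.mem_univ j)
  have key : ∀ (i j : Fin s),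
      EdgeDisjointPaths (bipGraph s z) (Sum.inl i) (Sum.inr j) (3 * m) := by
    intro i j
    by_cases hm : m = 0
    · have h0 : 3 * m = 0 := by omega
      rw [h0]
      exact ⟨Fin.elim0, fun a => a.elim0, fun a _ _ => a.elim0⟩
    · -- choose g
      have hcg : 3 * m ≤ ((univ.filter (fun i0 => z i0 j = false)).erase i).card := by
        have h1 := card_good1 (fun i0 => z i0 j)
        have h2 := Finset.pred_card_le_card_erase
          (s := univ.filter (fun i0 => z i0 j = false)) (a := i)
        have h3 := colsingle j
        omega
      obtain ⟨g, hginj, hgmem⟩ := exists_inj_of_card (fun _ => _) (fun _ => hcg)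
      simp only [Finset.mem_erase, Finset.mem_filter, Finset.mem_univ, true_and] at hgmem
      -- choose h
      have hch : ∀ a : Fin (3 * m), 3 * m ≤
          ((univ.filter (fun j0 => z i j0 = false ∧ z (g a) j0 = false)).erase j).card := by
        intro a
        have h1 := card_good (fun j0 => z i j0) (fun j0 => z (g a) j0)
        have h2 := Finset.pred_card_le_card_erase
          (s := univ.filter (fun j0 => z i j0 = false ∧ z (g a) j0 = false)) (a := j)
        have h3 := rowpair (Ne.symm (hgmem a).1)
        omega
      obtain ⟨h, hhinj, hhmem⟩ := exists_inj_of_card (fun a => _) hch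
      simp only [Finset.mem_erase, Finset.mem_filter, Finset.mem_univ, true_and] at hhmem
      exact edp_lr (3 * m) g h hginj hhinj (fun a => (hgmem a).1) (fun a => (hgmem a).2)
        (fun a => (hhmem a).1) (fun a => (hhmem a).2.1) (fun a => (hhmem a).2.2)
  rcases u with i | j <;> rcases v with i' | j'
  · have hne : i ≠ i' := fun h => huv (by rw [h])
    apply edp_ll hne
    have h1 := card_good (fun j => z i j) (fun j => z i' j)
    have h2 := rowpair hne
    omega
  · exact key i j'
  · exact (key i' j).symm
  · have hne : j ≠ j' := fun h => huv (by rw [h])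
    apply edp_rr hne
    have h1 := card_good (fun i => z i j) (fun i => z i j')
    have h2 := colpair hne
    omega
end

section
/- If every pair of vertices within part P₁ of a graph G is joined by at least k+1 edge-disjoint paths, every pair within part P₂ is joined by at least k+1 edge-disjoint paths, and exactly k edges cross between P₁ and P₂ (with V = P₁ ∪ P₂ disjoint, both nonempty), then the partition (P₁, P₂) is the unique minimum cut of G and its size is k. -/
open Finset
open scoped Classical

lemma walk_cross {V : Type*} [Fintype V] [DecidableEq V] (G : SimpleGraph V)
    (B : Finset V) : ∀ {u v : V} (w : G.Walk u v), u ∈ B → v ∉ B →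
    ∃ e ∈ w.edges, e ∈ cutEdges G B := by
  intro u v w
  induction w with
  | nil => intro hu hv; exact absurd hu hv
  | @cons x y z h p ih =>
    intro hu hv
    by_cases hy : y ∈ B
    · obtain ⟨e, he, hc⟩ := ih hy hv
      exact ⟨e, by simp [he], hc⟩
    · refine ⟨s(x, y), by simp, ?_⟩
      simp only [cutEdges, Finset.mem_filter, SimpleGraph.mem_edgeFinset]
      exact ⟨h, x, hu, y, Finset.mem_compl.mpr hy, rfl⟩

lemma cut_lb {V : Type*} [Fintype V] [DecidableEq V] (G : SimpleGraph V)
    (k : ℕ) (B : Finset V) {u v : V} (hu : u ∈ B) (hv : v ∉ B)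
    (hp : EdgeDisjointPaths G u v (k + 1)) : k < (cutEdges G B).card := by
  obtain ⟨f, _, hdisj⟩ := hp
  choose e he hc using fun a => walk_cross G B (f a) hu hv
  have hcard : (Finset.univ : Finset (Fin (k + 1))).card ≤ (cutEdges G B).card := by
    apply Finset.card_le_card_of_injOn e (fun a _ => hc a)
    intro a _ b _ hab
    by_contra hne
    exact hdisj a b hne (e a) (he a) (hab ▸ he b)
  simpa using hcard

/-- If every pair of vertices within `P₁` is joined by at least `k+1` edge-disjoint
paths, likewise within `P₂ = P₁ᶜ`, and exactly `k` edges cross between `P₁` and `P₂`,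
then `(P₁, P₂)` is the unique minimum cut of `G`, of size `k`: every other partition
has strictly more than `k` crossing edges. -/
theorem stmt12 {V : Type*} [Fintype V] [DecidableEq V] (G : SimpleGraph V)
    (k : ℕ) (P₁ : Finset V) (hP₁ : P₁.Nonempty) (hP₂ : P₁ᶜ.Nonempty)
    (h1 : ∀ u ∈ P₁, ∀ v ∈ P₁, u ≠ v → EdgeDisjointPaths G u v (k + 1))
    (h2 : ∀ u ∈ P₁ᶜ, ∀ v ∈ P₁ᶜ, u ≠ v → EdgeDisjointPaths G u v (k + 1))
    (hcut : (cutEdges G P₁).card = k) :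
    (∀ B : Finset V, B.Nonempty → B ≠ Finset.univ →
        B ≠ P₁ → B ≠ P₁ᶜ → k < (cutEdges G B).card)
      ∧ (cutEdges G P₁).card = k := by
  refine ⟨?_, hcut⟩
  intro B hBne hBuniv hBP1 hBP1c
  -- find u ∈ B, v ∉ B in the same part
  have key : ∃ u v, u ∈ B ∧ v ∉ B ∧ EdgeDisjointPaths G u v (k + 1) := by
    by_cases hs : P₁ ⊆ B
    · by_cases ht : P₁ᶜ ⊆ B
      · exact absurd (Finset.eq_univ_iff_forall.mpr fun x => by
          by_cases hx : x ∈ P₁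
          · exact hs hx
          · exact ht (Finset.mem_compl.mpr hx)) hBuniv
      · obtain ⟨v, hv1, hv2⟩ := Finset.not_subset.mp ht
        by_cases hu : ∃ u ∈ P₁ᶜ, u ∈ B
        · obtain ⟨u, hu1, hu2⟩ := hu
          exact ⟨u, v, hu2, hv2, h2 u hu1 v hv1 (fun h => hv2 (h ▸ hu2))⟩
        · push_neg at hu
          exact absurd (Finset.Subset.antisymm
            (fun x hx => by
              by_contra hx'
              exact hu x (Finset.mem_compl.mpr hx') hx)
            hs) hBP1
    · obtain ⟨v, hv1, hv2⟩ := Finset.not_subset.mp hs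
      by_cases hu : ∃ u ∈ P₁, u ∈ B
      · obtain ⟨u, hu1, hu2⟩ := hu
        exact ⟨u, v, hu2, hv2, h1 u hu1 v hv1 (fun h => hv2 (h ▸ hu2))⟩
      · push_neg at hu
        have hBsub : B ⊆ P₁ᶜ := fun x hx =>
          Finset.mem_compl.mpr (fun hx' => hu x hx' hx)
        by_cases ht : P₁ᶜ ⊆ B
        · exact absurd (Finset.Subset.antisymm hBsub ht) hBP1c
        · obtain ⟨w, hw1, hw2⟩ := Finset.not_subset.mp ht
          obtain ⟨u, hu1⟩ := hBne
          exact ⟨u, w, hu1, hw2,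
            h2 u (hBsub hu1) w hw1 (fun h => hw2 (h ▸ hu1))⟩
  obtain ⟨u, v, hu, hv, hp⟩ := key
  exact cut_lb G k B hu hv hp
end
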